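/- arXiv:2012.12891 — 7 statements merged into one kernel-verified Lean document; each statement's English description precedes it below -/
import Mathlib

section
/- Let s be an odd prime power, F = GF(s), C₀ the nonzero squares, and δ ∈ C₁ a nonzero non-square. If (s-1)/2 is even, then for every nonzero u ∈ F, the total number of pairs (x,y) ∈ C₀ × C₀ with (δ-1)x = u plus the number of pairs with (δ⁻¹-1)y = u equals exactly 1. (Here (δ-1)C₀ and (δ⁻¹-1)C₀ lie in different cosets of C₀, so together they cover F* exactly once.) -/
/-!
Put `a = u / (δ - 1)` and `b = u / (δ⁻¹ - 1)`; the two sets are `{a} ∩ C₀` and `{b} ∩ C₀`.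
Since `b = -δ * a`, and `-1` is a square when `(s - 1) / 2` is even, `b` differs from `a` by the
non-square factor `-δ`, so exactly one of `a`, `b` lies in `C₀`.
-/

theorem FiniteField.isSquare_neg_one_of_even_card_sub_one_div_two {F : Type*} [Field F]
    [Fintype F] (h : Even ((Fintype.card F - 1) / 2)) : IsSquare (-1 : F) := by
  rw [FiniteField.isSquare_neg_one_iff]
  obtain ⟨k, hk⟩ := h
  omega

theorem FiniteField.isSquare_mul_iff_not_isSquare {F : Type*} [Field F] [Fintype F] {c a : F}
    (hc : ¬IsSquare c) (ha : a ≠ 0) : IsSquare (c * a) ↔ ¬IsSquare a := by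
  classical
  have hc0 : c ≠ 0 := fun h => hc (h ▸ IsSquare.zero)
  rw [← quadraticChar_one_iff_isSquare (mul_ne_zero hc0 ha), map_mul,
    quadraticChar_neg_one_iff_not_isSquare.mpr hc, ← quadraticChar_neg_one_iff_not_isSquare]
  constructor <;> intro h <;> linarith

open Classical in
theorem ncard_setOf_nonzero_isSquare_mul_eq {K : Type*} [Field K] {k u : K} (hk : k ≠ 0)
    (hu : u ≠ 0) :
    {x : K | x ∈ {x : K | x ≠ 0 ∧ IsSquare x} ∧ k * x = u}.ncard =
      if IsSquare (u / k) then 1 else 0 := by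
  have hx : ∀ x, k * x = u ↔ x = u / k := fun x => by
    rw [eq_div_iff hk, mul_comm]
  have huk : u / k ≠ 0 := div_ne_zero hu hk
  have hset : {x : K | x ∈ {x : K | x ≠ 0 ∧ IsSquare x} ∧ k * x = u} =
      {x | x = u / k ∧ IsSquare x} := by
    ext x
    simp only [Set.mem_ofPred_eq, hx]
    exact ⟨fun ⟨⟨_, hsq⟩, hxu⟩ => ⟨hxu, hsq⟩, fun ⟨hxu, hsq⟩ => ⟨⟨hxu ▸ huk, hsq⟩, hxu⟩⟩
  rw [hset]
  split_ifs with hsq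
  · rw [Set.ncard_eq_one]
    exact ⟨u / k, Set.ext fun x => ⟨And.left, fun hxu => ⟨hxu, hxu ▸ hsq⟩⟩⟩
  · convert Set.ncard_empty K
    exact Set.eq_empty_of_forall_notMem fun x ⟨hxu, hxsq⟩ => hsq (hxu ▸ hxsq)

theorem div_inv_sub_one_eq_neg_mul_div_sub_one {K : Type*} [Field K] {δ : K} (h0 : δ ≠ 0)
    (h1 : δ ≠ 1) (u : K) : u / (δ⁻¹ - 1) = -δ * (u / (δ - 1)) := by
  have h1' : δ - 1 ≠ 0 := sub_ne_zero.mpr h1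
  have h1'' : 1 - δ ≠ 0 := sub_ne_zero.mpr h1.symm
  field_simp
  ring

theorem stmt4_general (F : Type*) [Field F] [Fintype F]
    (heven : Even ((Fintype.card F - 1) / 2))
    (C0 : Set F) (hC0 : C0 = {x : F | x ≠ 0 ∧ IsSquare x})
    (δ : F) (hδ : ¬ IsSquare δ)
    (u : F) (hu : u ≠ 0) :
    {x : F | x ∈ C0 ∧ (δ - 1) * x = u}.ncard
      + {y : F | y ∈ C0 ∧ (δ⁻¹ - 1) * y = u}.ncard = 1 := by
  subst hC0
  have hδ0 : δ ≠ 0 := fun h => hδ (h ▸ IsSquare.zero)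
  have hδ1 : δ ≠ 1 := fun h => hδ (h ▸ IsSquare.one)
  have hnegδ : ¬IsSquare (-δ) := fun h => hδ <| by
    simpa using (FiniteField.isSquare_neg_one_of_even_card_sub_one_div_two heven).mul h
  have hb : IsSquare (u / (δ⁻¹ - 1)) ↔ ¬IsSquare (u / (δ - 1)) := by
    rw [div_inv_sub_one_eq_neg_mul_div_sub_one hδ0 hδ1]
    exact FiniteField.isSquare_mul_iff_not_isSquare hnegδ (div_ne_zero hu (sub_ne_zero.mpr hδ1))
  rw [ncard_setOf_nonzero_isSquare_mul_eq (sub_ne_zero.mpr hδ1) hu,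
    ncard_setOf_nonzero_isSquare_mul_eq (sub_ne_zero.mpr (inv_ne_one.mpr hδ1)) hu, hb]
  split_ifs <;> rfl

/-- if `(s-1)/2` is even and `δ` is a nonzero non-square, then for every
nonzero `u`, the number of `x ∈ C₀` with `(δ-1)x = u` plus the number of `y ∈ C₀` with
`(δ⁻¹-1)y = u` equals exactly `1`. -/
theorem stmt4 (F : Type*) [Field F] [Fintype F]
    (hodd : Odd (Fintype.card F)) (heven : Even ((Fintype.card F - 1) / 2))
    (C0 : Set F) (hC0 : C0 = {x : F | x ≠ 0 ∧ IsSquare x})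
    (δ : F) (hδ0 : δ ≠ 0) (hδ : ¬ IsSquare δ)
    (u : F) (hu : u ≠ 0) :
    {x : F | x ∈ C0 ∧ (δ - 1) * x = u}.ncard
      + {y : F | y ∈ C0 ∧ (δ⁻¹ - 1) * y = u}.ncard = 1 :=
  stmt4_general F heven C0 hC0 δ hδ u hu
end

section
/- Let s be an odd prime power, F = GF(s), C₀ the nonzero squares, C₁ the nonzero non-squares, and δ ∈ C₁. If (s-1)/2 is odd, then δ - 1 and 1 - δ⁻¹ lie in different cosets of C₀ in F* (whenever both are nonzero), so the multiset (δ-1)C₀ ⊔ (1-δ⁻¹)C₀ covers every element of F* exactly once. -/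
/-!
Since `1 - δ⁻¹ = δ⁻¹ (δ - 1)` and multiplying a nonzero element by the non-square `δ⁻¹` flips
its quadratic character, `δ - 1` and `1 - δ⁻¹` lie in different cosets of `C₀`. For `a ≠ 0` the
only solution of `a x = u` is `a⁻¹ u`, and the two candidates `(δ - 1)⁻¹ u` and
`(1 - δ⁻¹)⁻¹ u = δ (δ - 1)⁻¹ u` again differ by a non-square factor, so exactly one lies in `C₀`.
-/

theorem FiniteField.isSquare_mul_iff_of_not_isSquare {F : Type*} [Field F] [Fintype F]
    {a b : F} (ha : ¬IsSquare a) (hb : b ≠ 0) : IsSquare (a * b) ↔ ¬IsSquare b := by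
  classical
  have hab : a * b ≠ 0 := mul_ne_zero (by rintro rfl; exact ha IsSquare.zero) hb
  rw [← quadraticChar_one_iff_isSquare hab, ← quadraticChar_neg_one_iff_not_isSquare, map_mul,
    quadraticChar_neg_one_iff_not_isSquare.mpr ha, neg_one_mul, neg_eq_iff_eq_neg]

open Classical in
theorem Set.ncard_setOf_mem_and_mul_eq {G : Type*} [GroupWithZero G] (S : Set G) {a : G}
    (ha : a ≠ 0) (u : G) :
    {x | x ∈ S ∧ a * x = u}.ncard = if a⁻¹ * u ∈ S then 1 else 0 := by
  have hsol : {x | x ∈ S ∧ a * x = u} = S ∩ {a⁻¹ * u} := Set.ext fun x => by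
    rw [Set.mem_inter_iff, Set.mem_singleton_iff, eq_inv_mul_iff_mul_eq₀ ha]; rfl
  split_ifs with hmem
  · rw [hsol, Set.inter_singleton_of_mem hmem, Set.ncard_singleton]
  · rw [hsol, Set.inter_singleton_eq_empty.mpr hmem, Set.ncard_empty]

theorem stmt5_general (F : Type*) [Field F] [Fintype F]
    (C0 : Set F) (hC0 : C0 = {x : F | x ≠ 0 ∧ IsSquare x})
    (δ : F) (hδ : ¬ IsSquare δ) :
    (δ - 1 ≠ 0 → 1 - δ⁻¹ ≠ 0 → ¬ (IsSquare (δ - 1) ↔ IsSquare (1 - δ⁻¹)))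
    ∧ ∀ u : F, u ≠ 0 →
      {x : F | x ∈ C0 ∧ (δ - 1) * x = u}.ncard
        + {y : F | y ∈ C0 ∧ (1 - δ⁻¹) * y = u}.ncard = 1 := by
  subst hC0
  have hδ0 : δ ≠ 0 := by rintro rfl; exact hδ IsSquare.zero
  have hδ1 : δ - 1 ≠ 0 := sub_ne_zero.mpr (by rintro rfl; exact hδ IsSquare.one)
  have hδinv : ¬IsSquare δ⁻¹ := by rwa [isSquare_inv]
  have hfactor : 1 - δ⁻¹ = δ⁻¹ * (δ - 1) := by field_simp
  refine ⟨fun _ _ => ?_, fun u hu => ?_⟩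
  · rw [hfactor, FiniteField.isSquare_mul_iff_of_not_isSquare hδinv hδ1]
    exact iff_not_self
  · have hv : (δ - 1)⁻¹ * u ≠ 0 := mul_ne_zero (inv_ne_zero hδ1) hu
    have hδ1' : 1 - δ⁻¹ ≠ 0 := hfactor ▸ mul_ne_zero (inv_ne_zero hδ0) hδ1
    have hrel : (1 - δ⁻¹)⁻¹ * u = δ * ((δ - 1)⁻¹ * u) := by rw [hfactor]; field_simp
    rw [Set.ncard_setOf_mem_and_mul_eq _ hδ1, Set.ncard_setOf_mem_and_mul_eq _ hδ1', hrel]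
    by_cases hsq : IsSquare ((δ - 1)⁻¹ * u) <;>
      simp [hv, hsq, hδ0, FiniteField.isSquare_mul_iff_of_not_isSquare hδ hv]

/-- if `(s-1)/2` is odd and `δ` is a nonzero non-square, then `δ - 1` and
`1 - δ⁻¹` lie in different cosets of the squares `C₀` in `F*`, so the multiset
`(δ-1)C₀ ⊔ (1-δ⁻¹)C₀` covers every element of `F*` exactly once. -/
theorem stmt5 (F : Type*) [Field F] [Fintype F]
    (hodd : Odd (Fintype.card F)) (htodd : ¬ Even ((Fintype.card F - 1) / 2))
    (C0 : Set F) (hC0 : C0 = {x : F | x ≠ 0 ∧ IsSquare x})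
    (δ : F) (hδ0 : δ ≠ 0) (hδ : ¬ IsSquare δ) :
    (δ - 1 ≠ 0 → 1 - δ⁻¹ ≠ 0 → ¬ (IsSquare (δ - 1) ↔ IsSquare (1 - δ⁻¹)))
    ∧ ∀ u : F, u ≠ 0 →
      {x : F | x ∈ C0 ∧ (δ - 1) * x = u}.ncard
        + {y : F | y ∈ C0 ∧ (1 - δ⁻¹) * y = u}.ncard = 1 :=
  stmt5_general F C0 hC0 δ hδ
end

section
/- Let s be an odd prime power, F = GF(s), t = (s-1)/2, C₀ the nonzero squares, C₁ the nonzero non-squares. For every nonzero u ∈ F, the number of times u occurs in the multiset (({0} ∪ C₁) - C₀) ⊔ (C₁ - ({0} ∪ C₀)) when t is even, or in (({0} ∪ C₁) - C₀) ⊔ (C₀ - ({0} ∪ C₁)) when t is odd, equals t + 1. Here A - B denotes the multiset {a - b : a ∈ A, b ∈ B}. -/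
/-!
The substitution `(a, b) ↦ (-b, -a)` preserves differences. Negation fixes the classes `C₀`, `C₁`
when `-1` is a square (`t` even) and swaps them otherwise (`t` odd), so in both cases the count
equals that of `u` in `(({0} ∪ C₁) - C₀) ⊔ (({0} ∪ C₀) - C₁)`. A representation `u = a - b` there
has `b ≠ 0` and `a` outside the class of `b`: either `a = 0` (one representation) or `a * b` is a
nonsquare. With `a = u + b`, `b * (u + b)` is a nonsquare iff `1 + u / b` is, and `b ↦ 1 + u / b`
permutes `F`, so there are `t` of the latter.
-/

open Pointwise

theorem Set.ncard_preimage_of_bijective {α β : Type*} {f : α → β} (hf : f.Bijective)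
    (s : Set β) : (f ⁻¹' s).ncard = s.ncard :=
  Set.ncard_preimage_of_injective_subset_range hf.injective (by simp [hf.surjective.range_eq])

section DiffCount

variable {G : Type*} [AddCommGroup G]

/-- The multiplicity of `u` in the multiset `A - B`. -/
noncomputable def diffCount (u : G) (A B : Set G) : ℕ :=
  {p : G × G | p.1 ∈ A ∧ p.2 ∈ B ∧ p.1 - p.2 = u}.ncard

theorem diffCount_eq_ncard (u : G) (A B : Set G) :
    diffCount u A B = {b | b ∈ B ∧ u + b ∈ A}.ncard := by
  have hpairs : {p : G × G | p.1 ∈ A ∧ p.2 ∈ B ∧ p.1 - p.2 = u}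
      = (fun b => (u + b, b)) '' {b | b ∈ B ∧ u + b ∈ A} := by
    ext ⟨a, b⟩
    simp only [Set.mem_ofPred_eq, Set.mem_image, Prod.mk.injEq]
    constructor
    · rintro ⟨ha, hb, rfl⟩
      exact ⟨b, ⟨hb, by rwa [sub_add_cancel]⟩, sub_add_cancel a b, rfl⟩
    · rintro ⟨b, ⟨hb, hub⟩, rfl, rfl⟩
      exact ⟨hub, hb, add_sub_cancel_right u b⟩
  rw [diffCount, hpairs, Set.ncard_image_of_injective _ fun _ _ h => congrArg Prod.snd h]

theorem diffCount_neg_swap (u : G) (A B : Set G) : diffCount u A B = diffCount u (-B) (-A) := by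
  have hinv : Function.Involutive fun p : G × G => (-p.2, -p.1) := fun p => by simp
  rw [diffCount, diffCount, ← Set.ncard_preimage_of_bijective hinv.bijective]
  congr 1
  ext ⟨a, b⟩
  simp only [Set.mem_preimage, Set.mem_ofPred_eq, Set.mem_neg, neg_sub_neg]
  tauto

end DiffCount

section Squares

variable (F : Type*) [Field F]

def nonzeroSquares : Set F := {x | x ≠ 0 ∧ IsSquare x}

def nonsquares : Set F := {x | x ≠ 0 ∧ ¬IsSquare x}

variable {F}

theorem isSquare_mul_sq_iff {a c : F} (hc : c ≠ 0) : IsSquare (a * c ^ 2) ↔ IsSquare a :=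
  ⟨fun h => by simpa [hc] using h.div (IsSquare.sq c), fun h => h.mul (IsSquare.sq c)⟩

theorem isSquare_mul_add_iff (u b : F) : IsSquare (b * (u + b)) ↔ IsSquare (1 + u / b) := by
  rcases eq_or_ne b 0 with rfl | hb
  · simp
  · rw [← isSquare_mul_sq_iff hb (a := 1 + u / b),
      show (1 + u / b) * b ^ 2 = b * (u + b) by field_simp; ring]

variable [Fintype F]

theorem isSquare_mul_iff {a b : F} (ha : a ≠ 0) (hb : b ≠ 0) :
    IsSquare (a * b) ↔ (IsSquare a ↔ IsSquare b) := by
  classical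
  rw [← quadraticChar_one_iff_isSquare (mul_ne_zero ha hb), ← quadraticChar_one_iff_isSquare ha,
    ← quadraticChar_one_iff_isSquare hb, map_mul]
  rcases quadraticChar_dichotomy ha with h | h <;>
    rcases quadraticChar_dichotomy hb with h' | h' <;> simp [h, h']

theorem isSquare_neg_iff {a : F} (ha : a ≠ 0) :
    IsSquare (-a) ↔ (IsSquare (-1 : F) ↔ IsSquare a) := by
  rw [neg_eq_neg_one_mul, isSquare_mul_iff (neg_ne_zero.mpr one_ne_zero) ha]

theorem neg_nonzeroSquares_of_isSquare (h : IsSquare (-1 : F)) :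
    -nonzeroSquares F = nonzeroSquares F := by
  ext x
  simp only [Set.mem_neg, nonzeroSquares, Set.mem_ofPred_eq, neg_ne_zero]
  exact and_congr_right fun hx => by simp [isSquare_neg_iff hx, h]

theorem neg_nonsquares_of_isSquare (h : IsSquare (-1 : F)) : -nonsquares F = nonsquares F := by
  ext x
  simp only [Set.mem_neg, nonsquares, Set.mem_ofPred_eq, neg_ne_zero]
  exact and_congr_right fun hx => by simp [isSquare_neg_iff hx, h]

theorem neg_nonzeroSquares_of_not_isSquare (h : ¬IsSquare (-1 : F)) :
    -nonzeroSquares F = nonsquares F := by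
  ext x
  simp only [Set.mem_neg, nonzeroSquares, nonsquares, Set.mem_ofPred_eq, neg_ne_zero]
  exact and_congr_right fun hx => by simp [isSquare_neg_iff hx, h]

theorem neg_nonsquares_of_not_isSquare (h : ¬IsSquare (-1 : F)) :
    -nonsquares F = nonzeroSquares F := by
  ext x
  simp only [Set.mem_neg, nonzeroSquares, nonsquares, Set.mem_ofPred_eq, neg_ne_zero]
  exact and_congr_right fun hx => by simp [isSquare_neg_iff hx, h]

theorem ncard_nonsquares (hF : ringChar F ≠ 2) :
    (nonsquares F).ncard = (Fintype.card F - 1) / 2 := by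
  obtain ⟨g, hg⟩ := FiniteField.exists_nonsquare hF
  have hg0 : g ≠ 0 := by rintro rfl; exact hg IsSquare.zero
  have hmul : nonsquares F = (g⁻¹ * ·) ⁻¹' nonzeroSquares F := by
    ext y
    simp only [nonsquares, nonzeroSquares, Set.mem_ofPred_eq, Set.mem_preimage, mul_ne_zero_iff,
      ne_eq, inv_eq_zero, hg0, not_false_eq_true, true_and]
    exact and_congr_right fun hy => by simp [isSquare_mul_iff (inv_ne_zero hg0) hy, hg]
  have hcard : (nonsquares F).ncard = (nonzeroSquares F).ncard := by
    rw [hmul]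
    exact Set.ncard_preimage_of_bijective (Equiv.mulLeft₀ _ (inv_ne_zero hg0)).bijective _
  have hunion : nonzeroSquares F ∪ nonsquares F = {0}ᶜ := by
    ext x
    simp only [nonzeroSquares, nonsquares, Set.mem_union, Set.mem_ofPred_eq, Set.mem_compl_iff,
      Set.mem_singleton_iff]
    tauto
  have hdisj : Disjoint (nonzeroSquares F) (nonsquares F) :=
    Set.disjoint_left.mpr fun _ hx hx' => hx'.2 hx.2
  have htotal := Set.ncard_compl ({0} : Set F)
  rw [← hunion, Set.ncard_union_eq hdisj, Set.ncard_singleton, Nat.card_eq_fintype_card] at htotal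
  omega

theorem ncard_setOf_not_isSquare_mul_add (hF : ringChar F ≠ 2) {u : F} (hu : u ≠ 0) :
    {b : F | ¬IsSquare (b * (u + b))}.ncard = (Fintype.card F - 1) / 2 := by
  have hinj : Function.Injective fun b : F => 1 + u / b := fun a b h => by
    rw [← div_div_cancel₀ hu (b := a), ← div_div_cancel₀ hu (b := b), add_left_cancel h]
  have hset : {b : F | ¬IsSquare (b * (u + b))} = (fun b => 1 + u / b) ⁻¹' nonsquares F := by
    ext b
    simp only [Set.mem_ofPred_eq, Set.mem_preimage, nonsquares, isSquare_mul_add_iff]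
    exact ⟨fun h => ⟨by rintro h0; exact h (h0 ▸ IsSquare.zero), h⟩, And.right⟩
  rw [hset, Set.ncard_preimage_of_bijective (Finite.injective_iff_bijective.mp hinj),
    ncard_nonsquares hF]

theorem diffCount_add_diffCount_eq (hF : ringChar F ≠ 2) {u : F} (hu : u ≠ 0) :
    diffCount u ({0} ∪ nonsquares F) (nonzeroSquares F)
      + diffCount u ({0} ∪ nonzeroSquares F) (nonsquares F) = (Fintype.card F - 1) / 2 + 1 := by
  have hdisj : Disjoint {b | b ∈ nonzeroSquares F ∧ u + b ∈ {0} ∪ nonsquares F}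
      {b | b ∈ nonsquares F ∧ u + b ∈ {0} ∪ nonzeroSquares F} :=
    Set.disjoint_left.mpr fun _ hb hb' => hb'.1.2 hb.1.2
  have hset : {b | b ∈ nonzeroSquares F ∧ u + b ∈ {0} ∪ nonsquares F}
      ∪ {b | b ∈ nonsquares F ∧ u + b ∈ {0} ∪ nonzeroSquares F}
      = insert (-u) {b : F | ¬IsSquare (b * (u + b))} := by
    ext b
    simp only [nonzeroSquares, nonsquares, Set.mem_union, Set.mem_ofPred_eq, Set.mem_insert_iff,
      Set.mem_singleton_iff, eq_neg_iff_add_eq_zero, add_comm b u]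
    rcases eq_or_ne b 0 with rfl | hb
    · simp [hu]
    rcases eq_or_ne (u + b) 0 with hub | hub
    · simp [hb, hub, em]
    · rw [isSquare_mul_iff hb hub]
      tauto
  have hnot : -u ∉ {b : F | ¬IsSquare (b * (u + b))} := by simp
  rw [diffCount_eq_ncard, diffCount_eq_ncard, ← Set.ncard_union_eq hdisj, hset,
    Set.ncard_insert_of_notMem hnot, ncard_setOf_not_isSquare_mul_add hF hu]

end Squares

/-- for every nonzero `u ∈ F`, the number of occurrences of `u` in the multiset
`(({0} ∪ C₁) - C₀) ⊔ (C₁ - ({0} ∪ C₀))` (if `t` even), respectively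
`(({0} ∪ C₁) - C₀) ⊔ (C₀ - ({0} ∪ C₁))` (if `t` odd), equals `t + 1`. -/
theorem stmt6 (F : Type*) [Field F] [Fintype F] (s t : ℕ)
    (hs : Fintype.card F = s) (hodd : Odd s) (ht : t = (s - 1) / 2)
    (C0 C1 : Set F)
    (hC0 : C0 = {x : F | x ≠ 0 ∧ IsSquare x})
    (hC1 : C1 = {x : F | x ≠ 0 ∧ ¬ IsSquare x})
    (u : F) (hu : u ≠ 0)
    (cnt : Set F → Set F → ℕ)
    (hcnt : ∀ A B : Set F,
      cnt A B = {p : F × F | p.1 ∈ A ∧ p.2 ∈ B ∧ p.1 - p.2 = u}.ncard) :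
    (Even t → cnt ({0} ∪ C1) C0 + cnt C1 ({0} ∪ C0) = t + 1)
    ∧ (¬ Even t → cnt ({0} ∪ C1) C0 + cnt C0 ({0} ∪ C1) = t + 1) := by
  obtain rfl : C0 = nonzeroSquares F := hC0
  obtain rfl : C1 = nonsquares F := hC1
  obtain rfl : cnt = diffCount u := funext fun A => funext fun B => hcnt A B
  obtain ⟨k, rfl⟩ := hodd
  have hF : ringChar F ≠ 2 := by
    rw [Ne, FiniteField.even_card_iff_char_two, hs]
    omega
  have hsum := diffCount_add_diffCount_eq hF hu
  rw [hs, ← ht] at hsum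
  have hpar : Even t ↔ IsSquare (-1 : F) := by
    rw [FiniteField.isSquare_neg_one_iff, hs, ht, Nat.even_iff]
    omega
  refine ⟨fun hev => ?_, fun hev => ?_⟩
  · have hsq := hpar.mp hev
    rwa [diffCount_neg_swap u (nonsquares F), Set.union_neg, Set.neg_singleton, neg_zero,
      neg_nonzeroSquares_of_isSquare hsq, neg_nonsquares_of_isSquare hsq]
  · have hnsq := mt hpar.mpr hev
    rwa [diffCount_neg_swap u (nonzeroSquares F), Set.union_neg, Set.neg_singleton, neg_zero,
      neg_nonsquares_of_not_isSquare hnsq, neg_nonzeroSquares_of_not_isSquare hnsq]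
end

section
/- Let s be an odd prime, S = Z/sZ with s ≥ 5, and let a, b be distinct nonzero elements of S with a ≠ ±b. Define the two-factor plan on 2s blocks of size 2: for each u ∈ S, block B₁+u has runs (a+u, b+u) and (-a+u, -b+u), and block B₂+u has runs (b+u, -a+u) and (-b+u, a+u). Then this plan is a POTB: with N₁₂ the 2-factor incidence matrix and Lᵢ the factor-versus-block incidence matrices, 2·N₁₂ = L₁L₂ᵀ. -/
/-- The runs of the plan of Theorem 3.1(a): blocks are indexed by `Fin 2 × ZMod s`
(the two initial blocks developed over `Z/sZ`), each block has two runs.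
Block `(0,u)` has runs `(a+u, b+u)` and `(-a+u, -b+u)`;
block `(1,u)` has runs `(b+u, -a+u)` and `(-b+u, a+u)`. -/
def runs8 (s : ℕ) [NeZero s] (a b : ZMod s) :
    Fin 2 × ZMod s → Fin 2 → ZMod s × ZMod s := fun j r =>
  if j.1 = 0 then
    if r = 0 then (a + j.2, b + j.2) else (-a + j.2, -b + j.2)
  else
    if r = 0 then (b + j.2, -a + j.2) else (-b + j.2, a + j.2)


lemma ind1 (s : ℕ) [NeZero s] (c d p q : ZMod s) :
    ∑ u : ZMod s, (if (c + u, d + u) = (p, q) then (1 : ℕ) else 0)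
      = if d - c = q - p then 1 else 0 := by
  have h : ∀ u : ZMod s, ((c + u, d + u) = (p, q)) ↔ (u = p - c ∧ d - c = q - p) := by
    intro u
    rw [Prod.mk.injEq]
    constructor
    · rintro ⟨h1, h2⟩
      exact ⟨by linear_combination h1, by linear_combination h2 - h1⟩
    · rintro ⟨h1, h2⟩
      exact ⟨by linear_combination h1, by linear_combination h1 + h2⟩
  simp only [h]
  by_cases hP : d - c = q - p <;> simp [hP]

lemma ind2 (s : ℕ) [NeZero s] (c d p q : ZMod s) :
    ∑ u : ZMod s, (if c + u = p then (1 : ℕ) else 0) * (if d + u = q then 1 else 0)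
      = if d - c = q - p then 1 else 0 := by
  rw [← ind1 s c d p q]
  apply Finset.sum_congr rfl
  intro u _
  by_cases h1 : c + u = p <;> by_cases h2 : d + u = q <;>
    simp [h1, h2, Prod.mk.injEq]

/-- the above two-factor plan on `2s` blocks of size `2` (for `s ≥ 5` an odd
prime, `a, b` distinct nonzero with `a ≠ ±b`) is a POTB: `2·N₁₂ = L₁L₂ᵀ`. -/
theorem stmt8 (s : ℕ) [NeZero s] (hp : s.Prime) (hs : 5 ≤ s)
    (a b : ZMod s) (ha : a ≠ 0) (hb : b ≠ 0) (hab : a ≠ b) (hab' : a ≠ -b)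
    (p q : ZMod s) :
    2 * (Finset.univ.filter
          (fun x : (Fin 2 × ZMod s) × Fin 2 => runs8 s a b x.1 x.2 = (p, q))).card
      = ∑ j : Fin 2 × ZMod s,
          (Finset.univ.filter (fun r : Fin 2 => (runs8 s a b j r).1 = p)).card *
          (Finset.univ.filter (fun r : Fin 2 => (runs8 s a b j r).2 = q)).card := by
  simp only [Finset.card_filter]
  rw [Fintype.sum_prod_type]
  simp only [Fintype.sum_prod_type, Fin.sum_univ_two, runs8]
  simp only [show ((0 : Fin 2) = 0) = True by simp, show ((1 : Fin 2) = 0) = False by decide,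
    if_true, if_false]
  simp only [Finset.sum_add_distrib, add_mul, mul_add, Finset.sum_add_distrib]
  simp only [ind1, ind2]
  simp only [show (-b - -a : ZMod s) = a - b from by ring,
    show (a - -b : ZMod s) = a + b from by ring,
    show (b - -a : ZMod s) = a + b from by ring,
    show (-b - a : ZMod s) = -a - b from by ring,
    show (-a - -b : ZMod s) = b - a from by ring]
  ring
end

section
/- Let s be an odd prime power, F = GF(s), t = (s-1)/2, F⁺ = F ∪ {∞}. In the plan P* = P₀ ⊕ F of Theorem 3.4 (blocks of size t+1 obtained by developing the two initial blocks B₀ and B₁ (t even) or B₀ and B₂ (t odd) over F), the two-factor incidence matrix N₁₂ (indexed by F⁺) equals J − I, the all-ones matrix minus the identity of order s+1. -/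
open scoped Classical

/-- The set of nonzero squares of a finite field. -/
noncomputable def C0F (F : Type*) [Field F] [Fintype F] : Finset F :=
  Finset.univ.filter (fun x => x ≠ 0 ∧ IsSquare x)

/-- Development of a run over `F⁺ = F ∪ {∞}` (with `∞ = none`): add `u` to each
finite coordinate, `∞ + u = ∞`. -/
def devRun {F : Type*} [Field F] (u : F) (p : Option F × Option F) :
    Option F × Option F :=
  (p.1.map (· + u), p.2.map (· + u))

/-- The initial block `B₀`: columns of `R⁰`, i.e. `(∞, 0)` and `(y, δy)` for `y ∈ C₀`. -/
noncomputable def blk0 (F : Type*) [Field F] [Fintype F] (δ : F) :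
    Multiset (Option F × Option F) :=
  ((none, some 0) : Option F × Option F) ::ₘ
    (C0F F).val.map (fun y => (some y, some (δ * y)))

/-- The initial block `B₁`: columns of `R¹`, i.e. `(0, ∞)` and `(y, δ⁻¹y)` for `y ∈ C₀`. -/
noncomputable def blk1 (F : Type*) [Field F] [Fintype F] (δ : F) :
    Multiset (Option F × Option F) :=
  ((some 0, none) : Option F × Option F) ::ₘ
    (C0F F).val.map (fun y => (some y, some (δ⁻¹ * y)))

/-- The initial block `B₂`: columns of `R²`, i.e. `(0, ∞)` and `(δ⁻¹y, y)` for `y ∈ C₀`. -/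
noncomputable def blk2 (F : Type*) [Field F] [Fintype F] (δ : F) :
    Multiset (Option F × Option F) :=
  ((some 0, none) : Option F × Option F) ::ₘ
    (C0F F).val.map (fun y => (some (δ⁻¹ * y), some y))

/-- All runs of the plan `P* = P₀ ⊕ F` of Theorem 3.4: the pair of initial blocks
(`B₀, B₁` if `t` even; `B₀, B₂` if `t` odd) developed over `F`. -/
noncomputable def totalRuns (F : Type*) [Field F] [Fintype F] (δ : F) (t : ℕ) :
    Multiset (Option F × Option F) :=
  Finset.univ.val.bind (fun u : F =>
    (blk0 F δ).map (devRun u)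
      + ((if Even t then blk1 F δ else blk2 F δ)).map (devRun u))

/-
Developing over `F`, the run `(∞, 0)` of `B₀` covers every `(∞, q)` with `q` finite exactly
once, and the run `(0, ∞)` of `B₁` or `B₂` covers every `(p, ∞)` with `p` finite exactly once.
A finite run `(f y, g y)` is translated onto `(a, b)` iff `g y - f y = b - a`, so with
`c = (b - a) / (δ - 1)` the finite runs of `B₀` cover `(a, b)` once iff `c` is a nonzero square,
those of `B₁` iff `-δ c` is, and those of `B₂` iff `δ c` is. The multiplier `-δ` (for `t` even,
when `-1` is a square) or `δ` (for `t` odd) is a non-square, so for `a ≠ b` exactly one of the two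
blocks covers `(a, b)`, while `c = 0` for `a = b`.
-/

open Finset

lemma card_filter_mul_eq {K : Type*} [Field K] (S : Finset K) {k : K} (hk : k ≠ 0) (d : K) :
    #{y ∈ S | k * y = d} = if d / k ∈ S then 1 else 0 := by
  have hsolve : ∀ y, k * y = d ↔ y = d / k := fun y => by rw [eq_div_iff hk, mul_comm]
  simp only [card_filter, hsolve, sum_ite_eq']

section

variable {F : Type*} [Field F] [Fintype F]

def develop (m : Multiset (Option F × Option F)) : Multiset (Option F × Option F) :=
  univ.val.bind fun u => m.map (devRun u)

lemma develop_add (m m' : Multiset (Option F × Option F)) :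
    develop (m + m') = develop m + develop m' := by
  simp only [develop, Multiset.map_add, Multiset.bind_add]

lemma develop_cons (x : Option F × Option F) (m : Multiset (Option F × Option F)) :
    develop (x ::ₘ m) = develop {x} + develop m := by
  rw [← Multiset.singleton_add, develop_add]

lemma totalRuns_eq_develop (δ : F) (t : ℕ) :
    totalRuns F δ t = develop (blk0 F δ) + develop (if Even t then blk1 F δ else blk2 F δ) :=
  Multiset.bind_add _ _ _

lemma count_develop (m : Multiset (Option F × Option F)) (z : Option F × Option F) :
    (develop m).count z = ∑ u, (m.map (devRun u)).count z := by
  rw [develop, Multiset.count_bind]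
  rfl

lemma count_develop_none_some (x : F) (p q : Option F) :
    (develop {((none : Option F), some x)}).count (p, q)
      = if p = none ∧ q ≠ none then 1 else 0 := by
  rw [count_develop]
  rcases p with _ | a <;> rcases q with _ | b <;> simp [devRun, Multiset.count_singleton]
  exact card_eq_one.mpr ⟨b - x, by ext; simp [eq_sub_iff_add_eq']; exact eq_comm⟩

lemma count_develop_some_none (x : F) (p q : Option F) :
    (develop {(some x, (none : Option F))}).count (p, q)
      = if p ≠ none ∧ q = none then 1 else 0 := by
  rw [count_develop]
  rcases p with _ | a <;> rcases q with _ | b <;> simp [devRun, Multiset.count_singleton]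
  exact card_eq_one.mpr ⟨a - x, by ext; simp [eq_sub_iff_add_eq']; exact eq_comm⟩

lemma count_develop_map_of_none (S : Finset F) (f g : F → F) {p q : Option F}
    (h : p = none ∨ q = none) :
    (develop (S.val.map fun y => (some (f y), some (g y)))).count (p, q) = 0 := by
  rcases h with rfl | rfl <;> simp [develop, devRun]

lemma count_develop_map_some_some (S : Finset F) (f g : F → F) (a b : F) :
    (develop (S.val.map fun y => (some (f y), some (g y)))).count (some a, some b)
      = #{y ∈ S | g y - f y = b - a} := by
  have hsolve : ∀ y u, ((some a, some b) = (some (f y + u), some (g y + u)))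
      ↔ (u = a - f y ∧ g y - f y = b - a) := by
    intro y u
    simp only [Prod.mk.injEq, Option.some.injEq]
    constructor
    · rintro ⟨rfl, rfl⟩
      constructor <;> ring
    · rintro ⟨rfl, h⟩
      exact ⟨by ring, by linear_combination -h⟩
  rw [count_develop]
  simp only [Multiset.map_map, Function.comp_def, devRun, Option.map_some, Multiset.count_map,
    hsolve, ← filter_val, ← card_def, card_filter]
  rw [sum_comm]
  simp only [ite_and, sum_ite_eq', mem_univ, if_true]

lemma mem_C0F {x : F} : x ∈ C0F F ↔ x ≠ 0 ∧ IsSquare x := by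
  simp [C0F]

lemma isSquare_mul_iff_not_isSquare {ε c : F} (hε : ¬IsSquare ε) (hc : c ≠ 0) :
    IsSquare (ε * c) ↔ ¬IsSquare c := by
  have hε0 : ε ≠ 0 := by rintro rfl; exact hε IsSquare.zero
  rw [← quadraticChar_one_iff_isSquare (mul_ne_zero hε0 hc), map_mul,
    quadraticChar_neg_one_iff_not_isSquare.mpr hε, ← quadraticChar_neg_one_iff_not_isSquare,
    neg_one_mul, neg_eq_iff_eq_neg]

lemma ite_mem_C0F_add_ite_mem_C0F_mul {ε : F} (hε : ¬IsSquare ε) (c : F) :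
    ((if c ∈ C0F F then 1 else 0) + if ε * c ∈ C0F F then 1 else 0) = if c = 0 then 0 else 1 := by
  by_cases hc : c = 0
  · simp [hc, mem_C0F]
  · have hεc : ε * c ≠ 0 := mul_ne_zero (by rintro rfl; exact hε IsSquare.zero) hc
    have := isSquare_mul_iff_not_isSquare hε hc
    by_cases hsq : IsSquare c <;> simp_all [mem_C0F]

lemma count_develop_blk0_some_some {δ : F} (hδ1 : δ ≠ 1) (a b : F) :
    (develop (blk0 F δ)).count (some a, some b)
      = if (b - a) / (δ - 1) ∈ C0F F then 1 else 0 := by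
  rw [blk0, develop_cons, Multiset.count_add, count_develop_none_some,
    count_develop_map_some_some]
  simp only [← sub_one_mul, card_filter_mul_eq _ (sub_ne_zero.mpr hδ1)]
  simp

lemma count_develop_blk1_some_some {δ : F} (hδ0 : δ ≠ 0) (hδ1 : δ ≠ 1) (a b : F) :
    (develop (blk1 F δ)).count (some a, some b)
      = if -δ * ((b - a) / (δ - 1)) ∈ C0F F then 1 else 0 := by
  have hk : δ⁻¹ - 1 ≠ 0 := sub_ne_zero.mpr (inv_ne_one.mpr hδ1)
  have hsol : (b - a) / (δ⁻¹ - 1) = -δ * ((b - a) / (δ - 1)) := by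
    field_simp [sub_ne_zero.mpr hδ1]
    ring
  rw [blk1, develop_cons, Multiset.count_add, count_develop_some_none,
    count_develop_map_some_some]
  simp only [← sub_one_mul, card_filter_mul_eq _ hk, hsol]
  simp

lemma count_develop_blk2_some_some {δ : F} (hδ0 : δ ≠ 0) (hδ1 : δ ≠ 1) (a b : F) :
    (develop (blk2 F δ)).count (some a, some b)
      = if δ * ((b - a) / (δ - 1)) ∈ C0F F then 1 else 0 := by
  have hk : 1 - δ⁻¹ ≠ 0 := sub_ne_zero.mpr (Ne.symm (inv_ne_one.mpr hδ1))
  have hsol : (b - a) / (1 - δ⁻¹) = δ * ((b - a) / (δ - 1)) := by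
    field_simp [sub_ne_zero.mpr hδ1]
  rw [blk2, develop_cons, Multiset.count_add, count_develop_some_none,
    count_develop_map_some_some]
  simp only [← one_sub_mul, card_filter_mul_eq _ hk, hsol]
  simp

end

theorem stmt10_general (F : Type*) [Field F] [Fintype F] (s t : ℕ)
    (hs : Fintype.card F = s) (ht : t = (s - 1) / 2)
    (δ : F) (hδ : ¬ IsSquare δ)
    (p q : Option F) :
    (totalRuns F δ t).count (p, q) = if p = q then 0 else 1 := by
  have hδ0 : δ ≠ 0 := by rintro rfl; exact hδ IsSquare.zero
  have hδ1 : δ ≠ 1 := by rintro rfl; exact hδ IsSquare.one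
  rw [totalRuns_eq_develop, Multiset.count_add]
  rcases p with _ | a <;> rcases q with _ | b
  case some.some =>
    have hc : (b - a) / (δ - 1) = 0 ↔ a = b := by
      rw [div_eq_zero_iff, sub_eq_zero, sub_eq_zero, or_iff_left hδ1, eq_comm]
    rw [count_develop_blk0_some_some hδ1]
    simp only [Option.some_inj, ← hc]
    by_cases hev : Even t
    · -- `t` even forces `s ≢ 3 (mod 4)`, so `-1` is a square and `-δ` is not.
      have hneg : ¬IsSquare (-δ) := fun h => hδ <| by
        have hs4 : Fintype.card F % 4 ≠ 3 := by obtain ⟨n, hn⟩ := hev; omega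
        simpa using (FiniteField.isSquare_neg_one_iff.mpr hs4).mul h
      rw [if_pos hev, count_develop_blk1_some_some hδ0 hδ1, ite_mem_C0F_add_ite_mem_C0F_mul hneg]
    · rw [if_neg hev, count_develop_blk2_some_some hδ0 hδ1, ite_mem_C0F_add_ite_mem_C0F_mul hδ]
  all_goals
    by_cases hev : Even t <;> simp [hev, blk0, blk1, blk2, develop_cons, count_develop_none_some,
      count_develop_some_none, count_develop_map_of_none]

/-- in the plan `P*` of Theorem 3.4 (with `δ` a nonzero non-square and
`t = (s-1)/2`), the two-factor incidence matrix `N₁₂`, indexed by `F⁺`, equals `J − I`. -/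
theorem stmt10 (F : Type*) [Field F] [Fintype F] (s t : ℕ)
    (hs : Fintype.card F = s) (hodd : Odd s) (ht : t = (s - 1) / 2)
    (δ : F) (hδ0 : δ ≠ 0) (hδ : ¬ IsSquare δ)
    (p q : Option F) :
    (totalRuns F δ t).count (p, q) = if p = q then 0 else 1 :=
  stmt10_general F s t hs ht δ hδ p q
end

section
/- Let P₀ be a plan for an s² experiment (two factors with levels in S = Z/sZ) with blocks B ⊆ S², and let V = {(i,j) : i,j ∈ S} = S². Then the plan P₀ + V, whose blocks are B + v for B a block of P₀ and v ∈ V (addition coordinatewise mod s), is a POTB: k·N₁₂ = L₁L₂ᵀ. -/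
/-- for any two-factor plan `P₀` with runs in `(Z/sZ)²` and `V = S²`, the
plan `P₀ + V` (blocks `B + v`, `v ∈ V`, addition coordinatewise mod `s`) is a POTB:
`k·N₁₂ = L₁L₂ᵀ`. -/
theorem stmt13 (s k : ℕ) [NeZero s] {β : Type*} [Fintype β]
    (P₀ : β → Fin k → ZMod s × ZMod s) (p q : ZMod s) :
    k * (Finset.univ.filter (fun x : (β × (ZMod s × ZMod s)) × Fin k =>
          P₀ x.1.1 x.2 + x.1.2 = (p, q))).card
      = ∑ j : β × (ZMod s × ZMod s),
          (Finset.univ.filter (fun r : Fin k => (P₀ j.1 r).1 + j.2.1 = p)).card *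
          (Finset.univ.filter (fun r : Fin k => (P₀ j.1 r).2 + j.2.2 = q)).card := by
  classical
  have hsum : ∀ (f : Fin k → ZMod s) (t : ZMod s),
      ∑ v : ZMod s, (Finset.univ.filter (fun r : Fin k => f r + v = t)).card = k := by
    intro f t
    simp only [Finset.card_filter]
    rw [Finset.sum_comm]
    have h1 : ∀ r : Fin k,
        (∑ v : ZMod s, if f r + v = t then (1:ℕ) else 0) = 1 := by
      intro r
      have he : ∀ v : ZMod s, (f r + v = t) ↔ (v = t - f r) := by
        intro v; rw [eq_sub_iff_add_eq, add_comm]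
      simp only [he, Finset.sum_ite_eq', Finset.mem_univ, if_true]
    rw [Finset.sum_congr rfl fun r _ => h1 r]
    simp
  have hsum2 : ∀ (f : Fin k → ZMod s × ZMod s) (t : ZMod s × ZMod s),
      ∑ v : ZMod s × ZMod s,
        (Finset.univ.filter (fun r : Fin k => f r + v = t)).card = k := by
    intro f t
    simp only [Finset.card_filter]
    rw [Finset.sum_comm]
    have h1 : ∀ r : Fin k,
        (∑ v : ZMod s × ZMod s, if f r + v = t then (1:ℕ) else 0) = 1 := by
      intro r
      have he : ∀ v : ZMod s × ZMod s, (f r + v = t) ↔ (v = t - f r) := by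
        intro v; rw [eq_sub_iff_add_eq, add_comm]
      simp only [he, Finset.sum_ite_eq', Finset.mem_univ, if_true]
    rw [Finset.sum_congr rfl fun r _ => h1 r]
    simp
  have hL : (Finset.univ.filter (fun x : (β × (ZMod s × ZMod s)) × Fin k =>
          P₀ x.1.1 x.2 + x.1.2 = (p, q))).card = Fintype.card β * k := by
    simp only [Finset.card_filter]
    rw [Fintype.sum_prod_type, Fintype.sum_prod_type]
    have hcf : ∀ (B : β) (v : ZMod s × ZMod s),
        (∑ r : Fin k, if P₀ B r + v = (p, q) then (1:ℕ) else 0)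
          = (Finset.univ.filter (fun r : Fin k => P₀ B r + v = (p, q))).card :=
      fun B v => (Finset.card_filter _ _).symm
    rw [Finset.sum_congr rfl fun B _ => Finset.sum_congr rfl fun v _ => hcf B v]
    rw [Finset.sum_congr rfl fun B _ => hsum2 (P₀ B) (p, q)]
    simp [Finset.card_univ, mul_comm]
  rw [hL, Fintype.sum_prod_type]
  have hB : ∀ B : β, (∑ v : ZMod s × ZMod s,
      (Finset.univ.filter (fun r : Fin k => (P₀ B r).1 + v.1 = p)).card *
      (Finset.univ.filter (fun r : Fin k => (P₀ B r).2 + v.2 = q)).card) = k * k := by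
    intro B
    rw [Fintype.sum_prod_type]
    calc (∑ v1 : ZMod s, ∑ v2 : ZMod s,
        (Finset.univ.filter (fun r : Fin k => (P₀ B r).1 + v1 = p)).card *
        (Finset.univ.filter (fun r : Fin k => (P₀ B r).2 + v2 = q)).card)
        = (∑ v1 : ZMod s, (Finset.univ.filter (fun r : Fin k => (P₀ B r).1 + v1 = p)).card) *
          (∑ v2 : ZMod s, (Finset.univ.filter (fun r : Fin k => (P₀ B r).2 + v2 = q)).card) := by
          rw [Finset.sum_mul_sum]
      _ = k * k := by rw [hsum, hsum]
  rw [Finset.sum_congr rfl fun B _ => hB B]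
  simp [Finset.card_univ]
  ring
end

section
/- Let P₀ be a two-factor plan with levels in S = Z/sZ in which every level of the first factor appears in at least one run, and which satisfies the POTB-with-missing-levels condition. Let V = {(0,i) : i ∈ S}. Then the plan P₀ + V (blocks B + v for blocks B of P₀ and v ∈ V) is a POTB in which every level of both factors appears. -/
/-- let `P₀` be a two-factor plan with runs in `(Z/sZ)²` in which every level
of the first factor appears and which satisfies the POTB condition `k·N₁₂ = L₁L₂ᵀ`
(with possibly missing levels).  With `V = {(0,i) : i ∈ S}`, the plan `P₀ + V` (blocks
indexed by `β × S`; the block `(b,v)` shifts the second coordinate of each run of block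
`b` by `v`) is a POTB in which every level of both factors appears. -/
theorem stmt14 (s k : ℕ) [NeZero s] {β : Type*} [Fintype β]
    (P₀ : β → Fin k → ZMod s × ZMod s)
    (hfull : ∀ p : ZMod s, ∃ x : β × Fin k, (P₀ x.1 x.2).1 = p)
    (hPOTB : ∀ p q : ZMod s,
      k * (Finset.univ.filter (fun x : β × Fin k => P₀ x.1 x.2 = (p, q))).card
        = ∑ b : β,
            (Finset.univ.filter (fun r : Fin k => (P₀ b r).1 = p)).card *
            (Finset.univ.filter (fun r : Fin k => (P₀ b r).2 = q)).card) :
    (∀ p q : ZMod s,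
      k * (Finset.univ.filter (fun x : (β × ZMod s) × Fin k =>
            ((P₀ x.1.1 x.2).1, (P₀ x.1.1 x.2).2 + x.1.2) = (p, q))).card
        = ∑ j : β × ZMod s,
            (Finset.univ.filter (fun r : Fin k => (P₀ j.1 r).1 = p)).card *
            (Finset.univ.filter (fun r : Fin k => (P₀ j.1 r).2 + j.2 = q)).card)
    ∧ (∀ p : ZMod s, ∃ x : (β × ZMod s) × Fin k, (P₀ x.1.1 x.2).1 = p)
    ∧ (∀ q : ZMod s, ∃ x : (β × ZMod s) × Fin k, (P₀ x.1.1 x.2).2 + x.1.2 = q) := by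
  classical
  obtain ⟨x0, hx0⟩ := hfull 0
  have hv : ∀ (c q : ZMod s), ∑ v : ZMod s, (if c + v = q then (1:ℕ) else 0) = 1 := by
    intro c q
    have h1 : ∀ v : ZMod s, (c + v = q) = (v = q - c) := by
      intro v
      simp [eq_sub_iff_add_eq, add_comm]
    simp only [h1]
    simp
  refine ⟨?_, ?_, ?_⟩
  · intro p q
    have lhs : (Finset.univ.filter (fun x : (β × ZMod s) × Fin k =>
            ((P₀ x.1.1 x.2).1, (P₀ x.1.1 x.2).2 + x.1.2) = (p, q))).card
        = ∑ b : β, (Finset.univ.filter (fun r : Fin k => (P₀ b r).1 = p)).card := by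
      rw [Finset.card_filter, Fintype.sum_prod_type, Fintype.sum_prod_type]
      refine Finset.sum_congr rfl fun b _ => ?_
      rw [Finset.sum_comm, Finset.card_filter]
      refine Finset.sum_congr rfl fun r _ => ?_
      simp only [Prod.mk.injEq]
      by_cases h : (P₀ b r).1 = p
      · simp only [h, true_and]
        rw [hv]; simp
      · simp [h]
    have rhsv : ∀ b : β,
        ∑ v : ZMod s, (Finset.univ.filter (fun r : Fin k => (P₀ b r).2 + v = q)).card = k := by
      intro b
      simp only [Finset.card_filter]
      rw [Finset.sum_comm]
      simp [hv]
    rw [lhs, Fintype.sum_prod_type, Finset.mul_sum]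
    refine Finset.sum_congr rfl fun b _ => ?_
    simp only
    have hms : ∑ v : ZMod s,
        (Finset.univ.filter (fun r : Fin k => (P₀ b r).1 = p)).card *
        (Finset.univ.filter (fun r : Fin k => (P₀ b r).2 + v = q)).card
      = (Finset.univ.filter (fun r : Fin k => (P₀ b r).1 = p)).card *
        ∑ v : ZMod s, (Finset.univ.filter (fun r : Fin k => (P₀ b r).2 + v = q)).card := by
      rw [Finset.mul_sum]
    rw [hms, rhsv b, mul_comm]
  · intro p
    obtain ⟨x, hx⟩ := hfull p
    exact ⟨((x.1, 0), x.2), hx⟩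
  · intro q
    exact ⟨((x0.1, q - (P₀ x0.1 x0.2).2), x0.2), by simp⟩
end
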